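/- arXiv:1210.7582 — 5 statements merged into one kernel-verified Lean document; each statement's English description precedes it below -/
import Mathlib

section
/- Let n, m ≥ 1 and let A be a linear map on ℂ^{m(1+n)} = ℂ^m ⊕ ℂ^{mn} satisfying Re⟨Af, f⟩ ≥ κ|f|² for all f, where κ > 0. Then the corner block A⊥⊥ is invertible, so the transformed matrix Â is well defined, and Â is strictly accretive with the explicit lower bound Re⟨Âf, f⟩ ≥ (κ/(1 + ‖A‖²)) |f|² for all f ∈ ℂ^{m(1+n)}, where ‖A‖ denotes the operator norm of A. -/
noncomputable section

open MeasureTheory Real ContinuousLinearMap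

/-- The "normal" component space `ℂ^m`. -/
abbrev NormalSp (m : ℕ) := EuclideanSpace ℂ (Fin m)
/-- The "tangential" component space `ℂ^{mn} ≅ (ℂ^m)ⁿ`. -/
abbrev TangSp (m n : ℕ) := EuclideanSpace ℂ (Fin m × Fin n)
/-- The full space `ℂ^{m(1+n)} = ℂ^m ⊕ ℂ^{mn}`. -/
abbrev FullSp (m n : ℕ) := EuclideanSpace ℂ (Fin m ⊕ Fin m × Fin n)
/-- `ℝⁿ` with the Euclidean structure. -/
abbrev Rn (n : ℕ) := EuclideanSpace ℝ (Fin n)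

namespace LayerPotential

variable {m n : ℕ}

/-- Injection of the normal part `ℂ^m → ℂ^{m(1+n)}`, `a ↦ (a, 0)`. -/
def injN (m n : ℕ) : NormalSp m →L[ℂ] FullSp m n :=
  LinearMap.toContinuousLinearMap
  { toFun := fun a => WithLp.toLp 2 (Sum.elim a 0 : Fin m ⊕ Fin m × Fin n → ℂ)
    map_add' := by
      intro a b; ext idx; rcases idx with i | p <;> simp
    map_smul' := by
      intro c a; ext idx; rcases idx with i | p <;> simp }

/-- Injection of the tangential part `ℂ^{mn} → ℂ^{m(1+n)}`, `b ↦ (0, b)`. -/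
def injT (m n : ℕ) : TangSp m n →L[ℂ] FullSp m n :=
  LinearMap.toContinuousLinearMap
  { toFun := fun b => WithLp.toLp 2 (Sum.elim 0 b : Fin m ⊕ Fin m × Fin n → ℂ)
    map_add' := by
      intro a b; ext idx; rcases idx with i | p <;> simp
    map_smul' := by
      intro c a; ext idx; rcases idx with i | p <;> simp }

/-- Projection onto the normal part `f ↦ f⊥`. -/
def projN (m n : ℕ) : FullSp m n →L[ℂ] NormalSp m :=
  LinearMap.toContinuousLinearMap
  { toFun := fun f => WithLp.toLp 2 (fun i => f (Sum.inl i) : Fin m → ℂ)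
    map_add' := by intro a b; ext i; simp
    map_smul' := by intro c a; ext i; simp }

/-- Projection onto the tangential part `f ↦ f∥`. -/
def projT (m n : ℕ) : FullSp m n →L[ℂ] TangSp m n :=
  LinearMap.toContinuousLinearMap
  { toFun := fun f => WithLp.toLp 2 (fun p => f (Sum.inr p) : Fin m × Fin n → ℂ)
    map_add' := by intro a b; ext p; simp
    map_smul' := by intro c a; ext p; simp }

/-- The corner block `A⊥⊥`. -/
def blockNN (A : FullSp m n →L[ℂ] FullSp m n) : NormalSp m →L[ℂ] NormalSp m :=
  projN m n ∘L A ∘L injN m n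

/-- The block `A⊥∥`. -/
def blockNT (A : FullSp m n →L[ℂ] FullSp m n) : TangSp m n →L[ℂ] NormalSp m :=
  projN m n ∘L A ∘L injT m n

/-- The block `A∥⊥`. -/
def blockTN (A : FullSp m n →L[ℂ] FullSp m n) : NormalSp m →L[ℂ] TangSp m n :=
  projT m n ∘L A ∘L injN m n

/-- The block `A∥∥`. -/
def blockTT (A : FullSp m n →L[ℂ] FullSp m n) : TangSp m n →L[ℂ] TangSp m n :=
  projT m n ∘L A ∘L injT m n

/-- The transformed matrix `Â`, defined using `Ring.inverse` of the corner block
(which is the honest inverse whenever `A⊥⊥` is invertible). -/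
def hatT (A : FullSp m n →L[ℂ] FullSp m n) : FullSp m n →L[ℂ] FullSp m n :=
  injN m n ∘L ((Ring.inverse (blockNN A)) ∘L projN m n
      - ((Ring.inverse (blockNN A)) ∘L blockNT A) ∘L projT m n)
  + injT m n ∘L ((blockTN A ∘L (Ring.inverse (blockNN A))) ∘L projN m n
      + (blockTT A - (blockTN A ∘L (Ring.inverse (blockNN A))) ∘L blockNT A) ∘L projT m n)

/-- The reflection `N(f⊥, f∥) = (−f⊥, f∥)`. -/
def reflN (m n : ℕ) : FullSp m n →L[ℂ] FullSp m n :=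
  injT m n ∘L projT m n - injN m n ∘L projN m n



/-- The lower triangular factor `[[1,0],[−σ,I]] : (a,b) ↦ (a, b − a⊗σ)`. -/
def lowTri (m : ℕ) (σ : Fin n → ℝ) : FullSp m n →L[ℂ] FullSp m n :=
  LinearMap.toContinuousLinearMap
  { toFun := fun f => WithLp.toLp 2 (Sum.elim (fun i => f (Sum.inl i))
      (fun p => f (Sum.inr p) - (σ p.2 : ℂ) * f (Sum.inl p.1)) :
        Fin m ⊕ Fin m × Fin n → ℂ)
    map_add' := by
      intro a b; ext idx; rcases idx with i | p <;> simp <;> ring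
    map_smul' := by
      intro c a; ext idx; rcases idx with i | p <;> simp <;> ring }

/-- The upper triangular factor `[[1,−σᵗ],[0,I]] : (a,b) ↦ (a − Σ_k σ_k b_k, b)`. -/
def upTri (m : ℕ) (σ : Fin n → ℝ) : FullSp m n →L[ℂ] FullSp m n :=
  LinearMap.toContinuousLinearMap
  { toFun := fun f => WithLp.toLp 2 (Sum.elim (fun i => f (Sum.inl i) - ∑ k, (σ k : ℂ) * f (Sum.inr (i, k)))
      (fun p => f (Sum.inr p)) : Fin m ⊕ Fin m × Fin n → ℂ)
    map_add' := by
      intro a b; ext idx; rcases idx with i | p <;>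
        simp [Finset.sum_add_distrib, mul_add] <;> ring
    map_smul' := by
      intro c a; ext idx; rcases idx with i | p <;>
        simp [Finset.mul_sum, mul_assoc, mul_left_comm, mul_sub] }

/-- The transformed coefficients `A_σ := [[1,−σᵗ],[0,I]] · A · [[1,0],[−σ,I]]`. -/
def coeffSigma (σ : Fin n → ℝ) (A : FullSp m n →L[ℂ] FullSp m n) :
    FullSp m n →L[ℂ] FullSp m n :=
  upTri m σ ∘L A ∘L lowTri m σ

/-- The map `g ↦ (ν₀ g⊥, g⊥ ⊗ ν)`. -/
def tensorMap (m : ℕ) (ν₀ : ℝ) (ν : Fin n → ℝ) : FullSp m n →L[ℂ] FullSp m n :=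
  LinearMap.toContinuousLinearMap
  { toFun := fun g => WithLp.toLp 2 (Sum.elim (fun i => (ν₀ : ℂ) * g (Sum.inl i))
      (fun p => (ν p.2 : ℂ) * g (Sum.inl p.1)) : Fin m ⊕ Fin m × Fin n → ℂ)
    map_add' := by
      intro a b; ext idx; rcases idx with i | p <;> simp <;> ring
    map_smul' := by
      intro c a; ext idx; rcases idx with i | p <;> simp <;> ring }

/-- The map `h ↦ (Σ_k ν_k h∥,k, −ν₀ h∥)`. -/
def contractMap (m : ℕ) (ν₀ : ℝ) (ν : Fin n → ℝ) : FullSp m n →L[ℂ] FullSp m n :=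
  LinearMap.toContinuousLinearMap
  { toFun := fun h => WithLp.toLp 2 (Sum.elim (fun i => ∑ k, (ν k : ℂ) * h (Sum.inr (i, k)))
      (fun p => -(ν₀ : ℂ) * h (Sum.inr p)) : Fin m ⊕ Fin m × Fin n → ℂ)
    map_add' := by
      intro a b; ext idx; rcases idx with i | p <;>
        simp [Finset.sum_add_distrib, mul_add] <;> ring
    map_smul' := by
      intro c a; ext idx; rcases idx with i | p <;>
        simp [Finset.mul_sum, mul_assoc, mul_left_comm, mul_sub] }

/-- The one-form coefficients `Λ_A(ν₀, ν)g := A(ν₀ g⊥, g⊥⊗ν) + (Σ_k ν_k (Ag)∥,k, −ν₀ (Ag)∥)`. -/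
def lambdaForm (A : FullSp m n →L[ℂ] FullSp m n) (ν₀ : ℝ) (ν : Fin n → ℝ) :
    FullSp m n →L[ℂ] FullSp m n :=
  A ∘L tensorMap m ν₀ ν + contractMap m ν₀ ν ∘L A

/-- Partial derivative `∂_k` of a scalar function on `ℝⁿ`. -/
def pd (k : Fin n) (g : Rn n → ℂ) (x : Rn n) : ℂ :=
  fderiv ℝ g x (EuclideanSpace.single k 1)

/-- The self-adjoint first order operator `D(g⊥, g∥) := (div g∥, −∇g⊥)` acting on
functions `ℝⁿ → ℂ^{m(1+n)}`. -/
def Dop (g : Rn n → FullSp m n) (x : Rn n) : FullSp m n :=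
  WithLp.toLp 2 (Sum.elim (fun i => ∑ k, pd k (fun y => g y (Sum.inr (i, k))) x)
    (fun p => - pd p.2 (fun y => g y (Sum.inl p.1)) x) : Fin m ⊕ Fin m × Fin n → ℂ)

/-- Partial derivative `∂_t` of a scalar function on `ℝ^{1+n} = ℝ × ℝⁿ`. -/
def pdt (F : ℝ × Rn n → ℂ) (q : ℝ × Rn n) : ℂ :=
  fderiv ℝ F q (1, 0)

/-- Partial derivative `∂_{x_k}` of a scalar function on `ℝ^{1+n} = ℝ × ℝⁿ`. -/
def pdx (k : Fin n) (F : ℝ × Rn n → ℂ) (q : ℝ × Rn n) : ℂ :=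
  fderiv ℝ F q (0, EuclideanSpace.single k 1)

/-- `∂_t` of a `ℂ^{m(1+n)}`-valued function, componentwise. -/
def pdtVec (F : ℝ × Rn n → FullSp m n) (q : ℝ × Rn n) : FullSp m n :=
  WithLp.toLp 2 (fun idx => pdt (fun r => F r idx) q : Fin m ⊕ Fin m × Fin n → ℂ)

/-- The full gradient `∇u = (∂_t u, ∇_x u)` of a `ℂ^m`-valued function on `ℝ^{1+n}`. -/
def fullGrad (u : ℝ × Rn n → NormalSp m) (q : ℝ × Rn n) : FullSp m n :=
  WithLp.toLp 2 (Sum.elim (fun i => pdt (fun r => u r i) q)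
    (fun p => pdx p.2 (fun r => u r p.1) q) : Fin m ⊕ Fin m × Fin n → ℂ)

/-- The divergence `div G = ∂_t G⊥ + Σ_k ∂_{x_k} G∥,k` of a `ℂ^{m(1+n)}`-valued field
on `ℝ^{1+n}`, valued in `ℂ^m`. -/
def divOp (G : ℝ × Rn n → FullSp m n) (q : ℝ × Rn n) : NormalSp m :=
  WithLp.toLp 2 (fun i => pdt (fun r => G r (Sum.inl i)) q
    + ∑ k, pdx k (fun r => G r (Sum.inr (i, k))) q : Fin m → ℂ)

/-- `u` is a weak (here: classical) solution of `div A∇u = 0` on `Ω`,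
for `t`-independent coefficients `A`. -/
def SolvesDiv (A : Rn n → FullSp m n →L[ℂ] FullSp m n) (u : ℝ × Rn n → NormalSp m)
    (Ω : Set (ℝ × Rn n)) : Prop :=
  ∀ q ∈ Ω, divOp (fun r => A r.2 (fullGrad u r)) q = 0

/-- The conormal gradient `∇_A u = ((A∇u)⊥, ∇_x u)`. -/
def conormalGrad (A : Rn n → FullSp m n →L[ℂ] FullSp m n) (u : ℝ × Rn n → NormalSp m)
    (q : ℝ × Rn n) : FullSp m n :=
  WithLp.toLp 2 (Sum.elim (fun i => (A q.2 (fullGrad u q)) (Sum.inl i))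
    (fun p => pdx p.2 (fun r => u r p.1) q) : Fin m ⊕ Fin m × Fin n → ℂ)

/-!
The corner `A⊥⊥` is invertible because `A` restricted to the normal part is still accretive and
the space is finite dimensional. `Â` swaps normal parts: for `g` with `f = ((A g)⊥, g∥)` one has
`Â f = (g⊥, (A g)∥)`, so `Re ⟨f, Â f⟩ = Re ⟨g, A g⟩ ≥ κ ‖g‖²`, while
`‖f‖² ≤ ‖A g‖² + ‖g‖² ≤ (1 + ‖A‖²) ‖g‖²`.
-/

section Coercive

variable {𝕜 E : Type*} [RCLike 𝕜] [NormedAddCommGroup E] [InnerProductSpace 𝕜 E]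
  [FiniteDimensional 𝕜 E]

theorem _root_.ContinuousLinearMap.isUnit_of_coercive {κ : ℝ} (hκ : 0 < κ) {B : E →L[𝕜] E}
    (hB : ∀ a, κ * ‖a‖ ^ 2 ≤ RCLike.re (inner 𝕜 a (B a))) : IsUnit B := by
  have := FiniteDimensional.complete 𝕜 E
  have hinj : Function.Injective B := by
    refine (injective_iff_map_eq_zero B).2 fun a ha => ?_
    have h := hB a
    rw [ha, inner_zero_right, map_zero] at h
    exact norm_eq_zero.1 (pow_eq_zero_iff two_ne_zero |>.1
      (le_antisymm (nonpos_of_mul_nonpos_right h hκ) (sq_nonneg _)))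
  exact B.isUnit_iff_bijective.2
    ⟨hinj, (LinearMap.injective_iff_surjective (f := (B : E →ₗ[𝕜] E))).1 hinj⟩

end Coercive

section Blocks

@[simp] lemma projN_injN (a : NormalSp m) : projN m n (injN m n a) = a := rfl
@[simp] lemma projT_injN (a : NormalSp m) : projT m n (injN m n a) = 0 := rfl
@[simp] lemma projN_injT (b : TangSp m n) : projN m n (injT m n b) = 0 := rfl
@[simp] lemma projT_injT (b : TangSp m n) : projT m n (injT m n b) = b := rfl

lemma inner_eq_inner_projN_add_inner_projT (f h : FullSp m n) :
    inner ℂ f h = inner ℂ (projN m n f) (projN m n h) + inner ℂ (projT m n f) (projT m n h) := by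
  simp [PiLp.inner_apply, Fintype.sum_sum_type, projN, projT]

lemma norm_sq_eq_norm_projN_sq_add_norm_projT_sq (f : FullSp m n) :
    ‖f‖ ^ 2 = ‖projN m n f‖ ^ 2 + ‖projT m n f‖ ^ 2 := by
  simp only [norm_sq_eq_re_inner (𝕜 := ℂ), inner_eq_inner_projN_add_inner_projT f f, map_add]

lemma norm_projN_sq_le (f : FullSp m n) : ‖projN m n f‖ ^ 2 ≤ ‖f‖ ^ 2 := by
  rw [norm_sq_eq_norm_projN_sq_add_norm_projT_sq f]
  exact le_add_of_nonneg_right (sq_nonneg _)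

lemma norm_projT_sq_le (f : FullSp m n) : ‖projT m n f‖ ^ 2 ≤ ‖f‖ ^ 2 := by
  rw [norm_sq_eq_norm_projN_sq_add_norm_projT_sq f]
  exact le_add_of_nonneg_left (sq_nonneg _)

lemma norm_injN (a : NormalSp m) : ‖injN m n a‖ = ‖a‖ := by
  have h := norm_sq_eq_norm_projN_sq_add_norm_projT_sq (injN m n a)
  rw [projN_injN, projT_injN, norm_zero, zero_pow two_ne_zero, add_zero] at h
  exact (sq_eq_sq₀ (norm_nonneg _) (norm_nonneg _)).1 h

lemma inner_injN_apply_injN (A : FullSp m n →L[ℂ] FullSp m n) (a : NormalSp m) :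
    inner ℂ (injN m n a) (A (injN m n a)) = inner ℂ a (blockNN A a) := by
  rw [inner_eq_inner_projN_add_inner_projT, projT_injN, inner_zero_left, add_zero, projN_injN]
  rfl

lemma isUnit_blockNN {κ : ℝ} (hκ : 0 < κ) {A : FullSp m n →L[ℂ] FullSp m n}
    (hacc : ∀ f : FullSp m n, κ * ‖f‖ ^ 2 ≤ (inner ℂ f (A f) : ℂ).re) :
    IsUnit (blockNN A) :=
  (blockNN A).isUnit_of_coercive hκ fun a => by
    simpa [norm_injN, inner_injN_apply_injN] using hacc (injN m n a)

end Blocks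

section Hat

variable {A : FullSp m n →L[ℂ] FullSp m n} (f : FullSp m n)

/-- The `g` with `f = ((A g)⊥, g∥)`, when `A⊥⊥` is invertible. -/
def hatPreimage (A : FullSp m n →L[ℂ] FullSp m n) (f : FullSp m n) : FullSp m n :=
  injN m n (Ring.inverse (blockNN A) (projN m n f - blockNT A (projT m n f)))
    + injT m n (projT m n f)

@[simp] lemma projT_hatPreimage : projT m n (hatPreimage A f) = projT m n f := by
  simp [hatPreimage]

lemma projN_apply_hatPreimage (hB : IsUnit (blockNN A)) :
    projN m n (A (hatPreimage A f)) = projN m n f := by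
  have hinv : ∀ x, blockNN A (Ring.inverse (blockNN A) x) = x :=
    DFunLike.congr_fun (Ring.mul_inverse_cancel _ hB)
  calc projN m n (A (hatPreimage A f))
      = blockNN A (Ring.inverse (blockNN A) (projN m n f - blockNT A (projT m n f)))
          + blockNT A (projT m n f) := by simp [hatPreimage, blockNN, blockNT]
    _ = projN m n f := by rw [hinv, sub_add_cancel]

lemma projN_hatT_apply : projN m n (hatT A f) = projN m n (hatPreimage A f) := by
  simp [hatT, hatPreimage]

lemma projT_hatT_apply : projT m n (hatT A f) = projT m n (A (hatPreimage A f)) := by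
  simp only [hatT, hatPreimage, blockTN, blockTT, comp_sub, sub_comp, comp_add, add_apply,
    sub_apply, comp_apply, map_add, map_sub, projT_injN, sub_self, projT_injT, zero_add]
  abel

lemma re_inner_hatT_apply (hB : IsUnit (blockNN A)) :
    (inner ℂ f (hatT A f)).re = (inner ℂ (hatPreimage A f) (A (hatPreimage A f))).re := by
  rw [inner_eq_inner_projN_add_inner_projT f,
    inner_eq_inner_projN_add_inner_projT (hatPreimage A f),
    projN_hatT_apply, projT_hatT_apply, projT_hatPreimage, projN_apply_hatPreimage f hB,
    Complex.add_re, Complex.add_re, ← inner_conj_symm (projN m n f), Complex.conj_re]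

lemma norm_sq_le_mul_norm_hatPreimage_sq (hB : IsUnit (blockNN A)) :
    ‖f‖ ^ 2 ≤ (1 + ‖A‖ ^ 2) * ‖hatPreimage A f‖ ^ 2 := by
  set g := hatPreimage A f
  have hAg : ‖A g‖ ^ 2 ≤ ‖A‖ ^ 2 * ‖g‖ ^ 2 := by
    rw [← mul_pow]; gcongr; exact A.le_opNorm g
  calc ‖f‖ ^ 2 = ‖projN m n (A g)‖ ^ 2 + ‖projT m n g‖ ^ 2 := by
        rw [projN_apply_hatPreimage f hB, projT_hatPreimage,
          norm_sq_eq_norm_projN_sq_add_norm_projT_sq]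
    _ ≤ ‖A g‖ ^ 2 + ‖g‖ ^ 2 := add_le_add (norm_projN_sq_le _) (norm_projT_sq_le _)
    _ ≤ (1 + ‖A‖ ^ 2) * ‖g‖ ^ 2 := by linarith

end Hat

theorem statement1_general (m n : ℕ) (κ : ℝ) (hκ : 0 < κ)
    (A : FullSp m n →L[ℂ] FullSp m n)
    (hacc : ∀ f : FullSp m n, κ * ‖f‖ ^ 2 ≤ (inner ℂ f (A f) : ℂ).re) :
    IsUnit (blockNN A) ∧
    ∀ f : FullSp m n, κ / (1 + ‖A‖ ^ 2) * ‖f‖ ^ 2 ≤ (inner ℂ f (hatT A f) : ℂ).re := by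
  have hB := isUnit_blockNN hκ hacc
  refine ⟨hB, fun f => ?_⟩
  set g := hatPreimage A f
  have hpos : 0 < 1 + ‖A‖ ^ 2 := by positivity
  calc κ / (1 + ‖A‖ ^ 2) * ‖f‖ ^ 2
      ≤ κ / (1 + ‖A‖ ^ 2) * ((1 + ‖A‖ ^ 2) * ‖g‖ ^ 2) := by
        gcongr; exact norm_sq_le_mul_norm_hatPreimage_sq f hB
    _ = κ * ‖g‖ ^ 2 := by field_simp
    _ ≤ (inner ℂ g (A g)).re := hacc g
    _ = (inner ℂ f (hatT A f)).re := (re_inner_hatT_apply f hB).symm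

/-- for a strictly accretive `A` on `ℂ^{m(1+n)}` the corner block
`A⊥⊥` is invertible, so `Â` is well defined, and `Â` is strictly accretive with
constant `κ/(1 + ‖A‖²)`. -/
theorem statement1 (m n : ℕ) (hm : 1 ≤ m) (hn : 1 ≤ n) (κ : ℝ) (hκ : 0 < κ)
    (A : FullSp m n →L[ℂ] FullSp m n)
    (hacc : ∀ f : FullSp m n, κ * ‖f‖ ^ 2 ≤ (inner ℂ f (A f) : ℂ).re) :
    IsUnit (blockNN A) ∧
    ∀ f : FullSp m n, κ / (1 + ‖A‖ ^ 2) * ‖f‖ ^ 2 ≤ (inner ℂ f (hatT A f) : ℂ).re :=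
  statement1_general m n κ hκ A hacc

end LayerPotential
end
end

section
/- Let n, m ≥ 1, let A be a linear map on ℂ^{m(1+n)} = ℂ^m ⊕ ℂ^{mn}, and let σ ∈ ℝⁿ. Let L := [[1, 0],[σ, I]] (i.e. L(a,b) = (a, b + a⊗σ)) and let L* = [[1, σᵗ],[0, I]] be its adjoint. Then L* · diag(−(A_σ)⊥⊥, (A_σ)∥∥) · L = Λ_A(−1, σ), where diag(−(A_σ)⊥⊥, (A_σ)∥∥) denotes the block diagonal map (a, b) ↦ (−(A_σ)⊥⊥ a, (A_σ)∥∥ b). -/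
noncomputable section

open MeasureTheory Real ContinuousLinearMap

namespace LayerPotential

variable {m n : ℕ}

/-!
Write `L = lowTri (-σ)`, `L* = upTri (-σ)`, `T = tensorMap (-1) σ`, `C = contractMap (-1) σ`.
Since `A_σ = upTri σ ∘ A ∘ lowTri σ`, the left-hand side is
`(L* P∥ upTri σ) A (lowTri σ P∥ L) - (L* P⊥ upTri σ) A (lowTri σ P⊥ L)`, and the four conjugated
coordinate projections are `C`, `1 + T`, `1 - C` and `-T`. The cross terms `C A T` cancel,
leaving `C A + A T = Λ_A(-1, σ)`.
-/

lemma lowTri_comp_injN_projN_comp_lowTri_neg (σ : Fin n → ℝ) :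
    lowTri m σ ∘L injN m n ∘L projN m n ∘L lowTri m (fun k => -σ k)
      = -tensorMap m (-1) σ := by
  ext g idx
  rcases idx with i | p <;> simp [lowTri, injN, projN, tensorMap]

lemma lowTri_comp_injT_projT_comp_lowTri_neg (σ : Fin n → ℝ) :
    lowTri m σ ∘L injT m n ∘L projT m n ∘L lowTri m (fun k => -σ k)
      = 1 + tensorMap m (-1) σ := by
  ext g idx
  rcases idx with i | p <;> simp [lowTri, injT, projT, tensorMap]

lemma upTri_neg_comp_injN_projN_comp_upTri (σ : Fin n → ℝ) :
    upTri m (fun k => -σ k) ∘L injN m n ∘L projN m n ∘L upTri m σ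
      = 1 - contractMap m (-1) σ := by
  ext g idx
  rcases idx with i | p <;> simp [upTri, injN, projN, contractMap]

lemma upTri_neg_comp_injT_projT_comp_upTri (σ : Fin n → ℝ) :
    upTri m (fun k => -σ k) ∘L injT m n ∘L projT m n ∘L upTri m σ
      = contractMap m (-1) σ := by
  ext g idx
  rcases idx with i | p <;> simp [upTri, injT, projT, contractMap]

theorem statement6_general (m n : ℕ)
    (A : FullSp m n →L[ℂ] FullSp m n) (σ : Fin n → ℝ) :
    upTri m (fun k => -σ k) ∘L
      (injT m n ∘L blockTT (coeffSigma σ A) ∘L projT m n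
        - injN m n ∘L blockNN (coeffSigma σ A) ∘L projN m n) ∘L
      lowTri m (fun k => -σ k)
    = lambdaForm A (-1) σ := by
  have regroup : upTri m (fun k => -σ k) ∘L
      (injT m n ∘L blockTT (coeffSigma σ A) ∘L projT m n
        - injN m n ∘L blockNN (coeffSigma σ A) ∘L projN m n) ∘L
      lowTri m (fun k => -σ k)
    = (upTri m (fun k => -σ k) ∘L injT m n ∘L projT m n ∘L upTri m σ) ∘L A ∘L
        (lowTri m σ ∘L injT m n ∘L projT m n ∘L lowTri m (fun k => -σ k))
      - (upTri m (fun k => -σ k) ∘L injN m n ∘L projN m n ∘L upTri m σ) ∘L A ∘L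
        (lowTri m σ ∘L injN m n ∘L projN m n ∘L lowTri m (fun k => -σ k)) := by
    simp only [blockTT, blockNN, coeffSigma, comp_sub, sub_comp, comp_assoc]
  rw [regroup, lowTri_comp_injN_projN_comp_lowTri_neg, lowTri_comp_injT_projT_comp_lowTri_neg,
    upTri_neg_comp_injN_projN_comp_upTri, upTri_neg_comp_injT_projT_comp_upTri]
  simp only [lambdaForm, one_def, comp_add, comp_neg, sub_comp, comp_id, id_comp]
  abel

/-- with `L = [[1,0],[σ,I]]` and its adjoint `L* = [[1,σᵗ],[0,I]]`,
one has `L* · diag(−(A_σ)⊥⊥, (A_σ)∥∥) · L = Λ_A(−1, σ)`. -/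
theorem statement6 (m n : ℕ) (hm : 1 ≤ m) (hn : 1 ≤ n)
    (A : FullSp m n →L[ℂ] FullSp m n) (σ : Fin n → ℝ) :
    upTri m (fun k => -σ k) ∘L
      (injT m n ∘L blockTT (coeffSigma σ A) ∘L projT m n
        - injN m n ∘L blockNN (coeffSigma σ A) ∘L projN m n) ∘L
      lowTri m (fun k => -σ k)
    = lambdaForm A (-1) σ :=
  statement6_general m n A σ

end LayerPotential
end
end

section
/- Let d ≥ 2 (playing the role of d = 1+n with n = d−1 ≥ 1), z₀ ∈ ℝ^d and C > 0. Let f : ℝ^d → ℂ^N be measurable and suppose that for every r > 0, ∫_{{z : r < |z−z₀| < 2r}} |f(z)|² dz ≤ C r^{2−d}. Then for every exponent p with 1 ≤ p < d/(d−1) there is a constant c depending only on d and p such that for all R > 0, ∫_{{z : |z−z₀| < R}} |f(z)|^p dz ≤ c C^{p/2} R^{d − (d−1)p}. In particular f is locally in L^p on ℝ^d for all 1 ≤ p < d/(d−1). -/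
/-!
On an annulus `r < ‖z - z₀‖ < 2r`, Hölder's inequality with exponents `2/p` and `2/(2-p)` turns
the `L²` bound into `∫ |f|^p ≤ (C r^(2-d))^(p/2) · vol(annulus)^(1-p/2) ≲ C^(p/2) r^(d-(d-1)p)`.
Up to the null set formed by `z₀` and the spheres `‖z - z₀‖ = R/2ⁿ`, the ball of radius `R` is
the union of the annuli with `r = R/2ⁿ⁺¹`. Since `d - (d-1)p > 0` exactly when `p < d/(d-1)`,
the annular bounds form a convergent geometric series whose sum is a multiple of
`C^(p/2) R^(d-(d-1)p)`.
-/

open MeasureTheory Real Metric Module Set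
open scoped ENNReal NNReal

section Holder

variable {α : Type*} [MeasurableSpace α] {μ : Measure α}

theorem lintegral_rpow_le_lintegral_rpow_mul_measure_univ {g : α → ℝ≥0∞} (hg : AEMeasurable g μ)
    {p q : ℝ} (hp : 0 < p) (hpq : p ≤ q) :
    ∫⁻ a, g a ^ p ∂μ ≤ (∫⁻ a, g a ^ q ∂μ) ^ (p / q) * μ univ ^ (1 - p / q) := by
  have h := ENNReal.rpow_le_rpow
    (eLpNorm'_le_eLpNorm'_mul_rpow_measure_univ hp hpq hg.aestronglyMeasurable) hp.le
  simp only [eLpNorm'_eq_lintegral_enorm, enorm_eq_self] at h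
  rwa [← ENNReal.rpow_mul, one_div_mul_cancel hp.ne', ENNReal.rpow_one,
    ENNReal.mul_rpow_of_nonneg _ _ hp.le, ← ENNReal.rpow_mul, ← ENNReal.rpow_mul,
    one_div_mul_eq_div, sub_mul, one_div_mul_cancel hp.ne', one_div_mul_eq_div] at h

end Holder

theorem exists_div_two_pow_lt_le {t R : ℝ} (ht : 0 < t) (htR : t < R) :
    ∃ n : ℕ, R / 2 ^ (n + 1) < t ∧ t ≤ R / 2 ^ n := by
  obtain ⟨n, hn, hn'⟩ := exists_nat_pow_near ((one_le_div ht).mpr htR.le) one_lt_two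
  exact ⟨n, by rwa [div_lt_iff₀ (by positivity), mul_comm, ← div_lt_iff₀ ht],
    by rwa [le_div_iff₀ (by positivity), mul_comm, ← le_div_iff₀ ht]⟩

theorem hasSum_div_two_pow_succ_rpow {α R : ℝ} (hα : 0 < α) (hR : 0 ≤ R) :
    HasSum (fun n : ℕ => (R / 2 ^ (n + 1)) ^ α) (R ^ α / (2 ^ α - 1)) := by
  have h2α : 1 < (2 : ℝ) ^ α := one_lt_rpow one_lt_two hα
  set q : ℝ := ((2 : ℝ) ^ α)⁻¹
  have hterm : ∀ n : ℕ, (R / 2 ^ (n + 1)) ^ α = R ^ α * q * q ^ n := fun n => by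
    rw [div_rpow hR (by positivity), ← rpow_natCast, ← rpow_mul zero_le_two, mul_comm,
      rpow_mul zero_le_two, rpow_natCast, mul_assoc, ← pow_succ', inv_pow, div_eq_mul_inv]
  have hsum := (hasSum_geometric_of_lt_one (by positivity) (inv_lt_one_of_one_lt₀ h2α)).mul_left
    (R ^ α * q)
  rw [show R ^ α / (2 ^ α - 1) = R ^ α * q * (1 - q)⁻¹ by
    simp only [q]; field_simp]
  exact hsum.congr_fun hterm

section Annulus

variable {E : Type*} [NormedAddCommGroup E]

def dyadicAnnulus (z₀ : E) (r : ℝ) : Set E := {z | r < ‖z - z₀‖ ∧ ‖z - z₀‖ < 2 * r}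

theorem ball_diff_iUnion_dyadicAnnulus_subset (z₀ : E) (R : ℝ) :
    ball z₀ R \ ⋃ n : ℕ, dyadicAnnulus z₀ (R / 2 ^ (n + 1)) ⊆
      {z₀} ∪ ⋃ n : ℕ, sphere z₀ (R / 2 ^ n) := by
  rintro z ⟨hz, hzA⟩
  rcases eq_or_ne z z₀ with rfl | hne
  · exact Or.inl rfl
  rw [mem_ball_iff_norm] at hz
  obtain ⟨n, hlt, hle⟩ := exists_div_two_pow_lt_le (norm_pos_iff.mpr (sub_ne_zero.mpr hne)) hz
  refine Or.inr (mem_iUnion.mpr ⟨n, ?_⟩)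
  rw [mem_sphere_iff_norm]
  refine hle.eq_or_lt.resolve_right fun hlt' => hzA (mem_iUnion.mpr ⟨n, hlt, ?_⟩)
  rwa [pow_succ, ← div_div, mul_div_cancel₀ _ two_ne_zero]

variable [NormedSpace ℝ E] [MeasurableSpace E] [BorelSpace E] [FiniteDimensional ℝ E]
  [Nontrivial E] (μ : Measure E) [μ.IsAddHaarMeasure]

theorem setLIntegral_ball_le_tsum_dyadicAnnulus (g : E → ℝ≥0∞) (z₀ : E) (R : ℝ) :
    ∫⁻ z in ball z₀ R, g z ∂μ ≤ ∑' n : ℕ, ∫⁻ z in dyadicAnnulus z₀ (R / 2 ^ (n + 1)), g z ∂μ := by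
  have hnull : μ (ball z₀ R \ ⋃ n : ℕ, dyadicAnnulus z₀ (R / 2 ^ (n + 1))) = 0 :=
    measure_mono_null (ball_diff_iUnion_dyadicAnnulus_subset z₀ R)
      (measure_union_null (measure_singleton z₀)
        (measure_iUnion_null fun n => Measure.addHaar_sphere μ z₀ _))
  exact (lintegral_mono_set' (ae_le_set.mpr hnull)).trans (lintegral_iUnion_le _ _)

theorem measure_dyadicAnnulus_le (z₀ : E) {r : ℝ} (hr : 0 ≤ r) :
    μ (dyadicAnnulus z₀ r) ≤
      ENNReal.ofReal ((2 * r) ^ finrank ℝ E * (μ (ball 0 1)).toReal) := by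
  calc μ (dyadicAnnulus z₀ r) ≤ μ (ball z₀ (2 * r)) :=
        measure_mono fun z hz => mem_ball_iff_norm.mpr hz.2
    _ = _ := by
      rw [Measure.addHaar_ball μ z₀ (by positivity), ENNReal.ofReal_mul (by positivity),
        ENNReal.ofReal_toReal measure_ball_lt_top.ne]

theorem setLIntegral_dyadicAnnulus_rpow_le {g : E → ℝ≥0∞} (hg : AEMeasurable g μ) (z₀ : E)
    {p C r : ℝ} (hp : 0 < p) (hp2 : p ≤ 2) (hC : 0 ≤ C) (hr : 0 < r)
    (h : ∫⁻ z in dyadicAnnulus z₀ r, g z ^ 2 ∂μ ≤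
      ENNReal.ofReal (C * r ^ (2 - (finrank ℝ E : ℝ)))) :
    ∫⁻ z in dyadicAnnulus z₀ r, g z ^ p ∂μ ≤
      ENNReal.ofReal ((2 ^ finrank ℝ E * (μ (ball 0 1)).toReal) ^ (1 - p / 2) * C ^ (p / 2) *
        r ^ ((finrank ℝ E : ℝ) - ((finrank ℝ E : ℝ) - 1) * p)) := by
  set d : ℕ := finrank ℝ E
  set B : ℝ := (μ (ball 0 1)).toReal
  have hp2' : 0 ≤ 1 - p / 2 := by linarith
  have hscale : (C * r ^ (2 - (d : ℝ))) ^ (p / 2) * ((2 * r) ^ d * B) ^ (1 - p / 2) =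
      (2 ^ d * B) ^ (1 - p / 2) * C ^ (p / 2) * r ^ ((d : ℝ) - ((d : ℝ) - 1) * p) := by
    rw [mul_pow, mul_right_comm, mul_rpow hC (by positivity), mul_rpow (by positivity)
      (by positivity), ← rpow_natCast r d, ← rpow_mul hr.le, ← rpow_mul hr.le,
      show (d : ℝ) - (d - 1) * p = (2 - d) * (p / 2) + d * (1 - p / 2) by ring, rpow_add hr]
    ring
  calc ∫⁻ z in dyadicAnnulus z₀ r, g z ^ p ∂μ
      ≤ (∫⁻ z in dyadicAnnulus z₀ r, g z ^ (2 : ℝ) ∂μ) ^ (p / 2) *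
          μ (dyadicAnnulus z₀ r) ^ (1 - p / 2) := by
        simpa only [Measure.restrict_apply_univ] using
          lintegral_rpow_le_lintegral_rpow_mul_measure_univ hg.restrict hp hp2
    _ ≤ ENNReal.ofReal (C * r ^ (2 - (d : ℝ))) ^ (p / 2) *
          ENNReal.ofReal ((2 * r) ^ d * B) ^ (1 - p / 2) := by
        simp only [ENNReal.rpow_two]
        gcongr
        exact measure_dyadicAnnulus_le μ z₀ hr.le
    _ = _ := by
      rw [ENNReal.ofReal_rpow_of_nonneg (by positivity) (by positivity),
        ENNReal.ofReal_rpow_of_nonneg (by positivity) hp2', ← ENNReal.ofReal_mul (by positivity),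
        hscale]

theorem setLIntegral_ball_rpow_le {g : E → ℝ≥0∞} (hg : AEMeasurable g μ) (z₀ : E)
    {p C R : ℝ} (hp : 0 < p) (hp2 : p ≤ 2) (hC : 0 ≤ C) (hR : 0 < R)
    (hα : 0 < (finrank ℝ E : ℝ) - ((finrank ℝ E : ℝ) - 1) * p)
    (h : ∀ r, 0 < r → ∫⁻ z in dyadicAnnulus z₀ r, g z ^ 2 ∂μ ≤
      ENNReal.ofReal (C * r ^ (2 - (finrank ℝ E : ℝ)))) :
    ∫⁻ z in ball z₀ R, g z ^ p ∂μ ≤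
      ENNReal.ofReal ((2 ^ finrank ℝ E * (μ (ball 0 1)).toReal) ^ (1 - p / 2) /
        (2 ^ ((finrank ℝ E : ℝ) - ((finrank ℝ E : ℝ) - 1) * p) - 1) * C ^ (p / 2) *
          R ^ ((finrank ℝ E : ℝ) - ((finrank ℝ E : ℝ) - 1) * p)) := by
  set α : ℝ := (finrank ℝ E : ℝ) - ((finrank ℝ E : ℝ) - 1) * p
  set K : ℝ := (2 ^ finrank ℝ E * (μ (ball 0 1)).toReal) ^ (1 - p / 2)
  have hsum := (hasSum_div_two_pow_succ_rpow hα hR.le).mul_left (K * C ^ (p / 2))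
  calc ∫⁻ z in ball z₀ R, g z ^ p ∂μ
      ≤ ∑' n : ℕ, ∫⁻ z in dyadicAnnulus z₀ (R / 2 ^ (n + 1)), g z ^ p ∂μ :=
        setLIntegral_ball_le_tsum_dyadicAnnulus μ _ z₀ R
    _ ≤ ∑' n : ℕ, ENNReal.ofReal (K * C ^ (p / 2) * (R / 2 ^ (n + 1)) ^ α) :=
        ENNReal.tsum_le_tsum fun n =>
          setLIntegral_dyadicAnnulus_rpow_le μ hg z₀ hp hp2 hC (by positivity) (h _ (by positivity))
    _ = ENNReal.ofReal (K / (2 ^ α - 1) * C ^ (p / 2) * R ^ α) := by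
        rw [← ENNReal.ofReal_tsum_of_nonneg (fun n => by positivity) hsum.summable, hsum.tsum_eq]
        ring_nf

end Annulus

theorem locallyIntegrable_of_setLIntegral_ball_lt_top {X : Type*} [PseudoMetricSpace X]
    [MeasurableSpace X] {μ : Measure X} {g : X → ℝ} (hg : AEStronglyMeasurable g μ) (z₀ : X)
    (h : ∀ R, 0 < R → ∫⁻ z in ball z₀ R, ‖g z‖ₑ ∂μ < ⊤) : LocallyIntegrable g μ := fun x =>
  ⟨ball z₀ (dist x z₀ + 1), isOpen_ball.mem_nhds (by simp),
    hg.restrict, h _ (by positivity)⟩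

/-- dyadic annular `L²` bounds `∫_{r<|z−z₀|<2r} |f|² ≤ C r^{2−d}` imply,
for every `1 ≤ p < d/(d−1)`, a local `L^p` bound
`∫_{|z−z₀|<R} |f|^p ≤ c C^{p/2} R^{d−(d−1)p}` with `c = c(d,p)`; in particular `f`
is locally in `L^p`. -/
theorem statement8 (d : ℕ) (hd : 2 ≤ d) (p : ℝ) (hp1 : 1 ≤ p)
    (hp2 : p < (d : ℝ) / ((d : ℝ) - 1)) :
    ∃ c : ℝ, 0 < c ∧
      ∀ (N : ℕ) (C : ℝ), 0 < C →
      ∀ (z₀ : EuclideanSpace ℝ (Fin d)) (f : EuclideanSpace ℝ (Fin d) → EuclideanSpace ℂ (Fin N)),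
        StronglyMeasurable f →
        (∀ r : ℝ, 0 < r →
          ∫⁻ z in {z : EuclideanSpace ℝ (Fin d) | r < ‖z - z₀‖ ∧ ‖z - z₀‖ < 2 * r},
              (‖f z‖₊ : ℝ≥0∞) ^ 2
            ≤ ENNReal.ofReal (C * r ^ (2 - (d : ℝ)))) →
        (∀ R : ℝ, 0 < R →
          ∫⁻ z in {z : EuclideanSpace ℝ (Fin d) | ‖z - z₀‖ < R},
              (‖f z‖₊ : ℝ≥0∞) ^ p
            ≤ ENNReal.ofReal (c * C ^ (p / 2) * R ^ ((d : ℝ) - ((d : ℝ) - 1) * p))) ∧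
        LocallyIntegrable (fun z => ‖f z‖ ^ p) := by
  have hd' : (2 : ℝ) ≤ d := by exact_mod_cast hd
  have hp0 : 0 < p := by linarith
  have hp2' : p ≤ 2 := hp2.le.trans (by rw [div_le_iff₀ (by linarith)]; linarith)
  have hα : 0 < (d : ℝ) - ((d : ℝ) - 1) * p := by rw [lt_div_iff₀ (by linarith)] at hp2; linarith
  have : Nonempty (Fin d) := ⟨⟨0, by omega⟩⟩
  have hB : 0 < (volume (ball (0 : EuclideanSpace ℝ (Fin d)) 1)).toReal :=
    ENNReal.toReal_pos (measure_ball_pos _ _ one_pos).ne' measure_ball_lt_top.ne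
  set c : ℝ := (2 ^ d * (volume (ball (0 : EuclideanSpace ℝ (Fin d)) 1)).toReal) ^ (1 - p / 2) /
    (2 ^ ((d : ℝ) - ((d : ℝ) - 1) * p) - 1)
  have hc : 0 < c := div_pos (rpow_pos_of_pos (by positivity) _)
    (sub_pos.mpr (one_lt_rpow one_lt_two hα))
  refine ⟨c, hc, fun N C hC z₀ f hf hann => ?_⟩
  have hball : ∀ R, 0 < R → ∫⁻ z in ball z₀ R, (‖f z‖₊ : ℝ≥0∞) ^ p ≤
      ENNReal.ofReal (c * C ^ (p / 2) * R ^ ((d : ℝ) - ((d : ℝ) - 1) * p)) := fun R hR => by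
    simpa only [finrank_euclideanSpace_fin] using
      setLIntegral_ball_rpow_le volume hf.measurable.nnnorm.coe_nnreal_ennreal.aemeasurable z₀
        hp0 hp2' hC.le hR (by simpa only [finrank_euclideanSpace_fin] using hα)
        fun r hr => by rw [finrank_euclideanSpace_fin]; exact hann r hr
  refine ⟨fun R hR => by rw [← ball_eq]; exact hball R hR,
    locallyIntegrable_of_setLIntegral_ball_lt_top
      (hf.norm.measurable.pow_const p).aestronglyMeasurable z₀ fun R hR => ?_⟩
  calc ∫⁻ z in ball z₀ R, ‖‖f z‖ ^ p‖ₑ = ∫⁻ z in ball z₀ R, (‖f z‖₊ : ℝ≥0∞) ^ p := by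
        refine lintegral_congr fun z => ?_
        rw [Real.enorm_eq_ofReal (by positivity),
          ← ENNReal.ofReal_rpow_of_nonneg (norm_nonneg _) hp0.le, ofReal_norm, enorm_eq_nnnorm]
    _ < ⊤ := (hball R hR).trans_lt ENNReal.ofReal_lt_top
end

section
/- Let n, m ≥ 1, let Ω ⊆ ℝ^{1+n} be open, and let A : ℝⁿ → L(ℂ^{m(1+n)}) be continuously differentiable with A⊥⊥(x) invertible for every x; set B(x) := Â(x). Let v : Ω → ℂ^m ⊕ (ℂ^m)ⁿ be twice continuously differentiable and solve ∂_t v + B(Dv) = 0 in Ω, where D acts in the x-variable for each fixed t. Then u := −v⊥ solves div A∇u = 0 in Ω, and the conormal gradient of u equals Dv, i.e. (A∇u)⊥ = (Dv)⊥ and ∇_x u = (Dv)∥ in Ω. -/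
/-! Reading the block form of `Â` backwards, `Â h = k` means `A (k⊥, h∥) = (h⊥, k∥)`. With
`h = Dv` and `k = -∂ₜv` this says `A∇u = ((Dv)⊥, -(∂ₜv)∥)`, whose divergence is
`Σₖ (∂ₜ∂ₖ - ∂ₖ∂ₜ) v∥,ₖ = 0` by the symmetry of second derivatives. -/

noncomputable section

open MeasureTheory Real ContinuousLinearMap

namespace LayerPotential

variable {m n : ℕ}

section BlockAlgebra

@[simp] lemma injN_apply_inl (a : NormalSp m) (i : Fin m) : injN m n a (Sum.inl i) = a i := rfl
@[simp] lemma injN_apply_inr (a : NormalSp m) (p : Fin m × Fin n) :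
    injN m n a (Sum.inr p) = 0 := rfl
@[simp] lemma injT_apply_inl (b : TangSp m n) (i : Fin m) : injT m n b (Sum.inl i) = 0 := rfl
@[simp] lemma injT_apply_inr (b : TangSp m n) (p : Fin m × Fin n) :
    injT m n b (Sum.inr p) = b p := rfl
@[simp] lemma projN_apply (f : FullSp m n) (i : Fin m) : projN m n f i = f (Sum.inl i) := rfl
@[simp] lemma projT_apply (f : FullSp m n) (p : Fin m × Fin n) :
    projT m n f p = f (Sum.inr p) := rfl

lemma injN_projN_add_injT_projT (f : FullSp m n) :
    injN m n (projN m n f) + injT m n (projT m n f) = f := by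
  ext (i | p) <;> simp

lemma ext_projN_projT {f g : FullSp m n} (hN : projN m n f = projN m n g)
    (hT : projT m n f = projT m n g) : f = g := by
  rw [← injN_projN_add_injT_projT f, hN, hT, injN_projN_add_injT_projT]

lemma apply_injN_add_injT (A : FullSp m n →L[ℂ] FullSp m n) (a : NormalSp m) (b : TangSp m n) :
    A (injN m n a + injT m n b)
      = injN m n (blockNN A a + blockNT A b) + injT m n (blockTN A a + blockTT A b) := by
  apply ext_projN_projT <;> simp [blockNN, blockNT, blockTN, blockTT]

lemma apply_hatT_swap {A : FullSp m n →L[ℂ] FullSp m n} (hA : IsUnit (blockNN A))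
    (h : FullSp m n) :
    A (injN m n (projN m n (hatT A h)) + injT m n (projT m n h))
      = injN m n (projN m n h) + injT m n (projT m n (hatT A h)) := by
  have hinv : ∀ a, blockNN A (Ring.inverse (blockNN A) a) = a := fun a => by
    change (blockNN A * Ring.inverse (blockNN A)) a = a
    rw [Ring.mul_inverse_cancel _ hA]
    rfl
  rw [apply_injN_add_injT]
  apply ext_projN_projT
  · simp [hatT, hinv]
  · simp [hatT]
    abel

end BlockAlgebra

lemma fderiv_fderiv_apply_comm {E F : Type*} [NormedAddCommGroup E] [NormedSpace ℝ E]
    [NormedAddCommGroup F] [NormedSpace ℝ F] {f : E → F} {x : E} (hf : ContDiffAt ℝ 2 f x)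
    (e w : E) :
    fderiv ℝ (fun y => fderiv ℝ f y w) x e = fderiv ℝ (fun y => fderiv ℝ f y e) x w := by
  have hf' : DifferentiableAt ℝ (fderiv ℝ f) x :=
    (hf.fderiv_right (m := 1) (by norm_num)).differentiableAt one_ne_zero
  rw [fderiv_clm_apply hf' (differentiableAt_const w),
    fderiv_clm_apply hf' (differentiableAt_const e)]
  simpa using hf.isSymmSndFDerivAt (by simp) e w

section PartialDerivatives

variable {f : ℝ × Rn n → ℂ} {q : ℝ × Rn n}

lemma pdt_neg : pdt (fun r => -f r) q = -pdt f q := by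
  simp [pdt, fderiv_fun_neg]

lemma pdx_neg (k : Fin n) : pdx k (fun r => -f r) q = -pdx k f q := by
  simp [pdx, fderiv_fun_neg]

lemma pdt_sum {ι : Type*} (s : Finset ι) {F : ι → ℝ × Rn n → ℂ}
    (hF : ∀ k ∈ s, DifferentiableAt ℝ (F k) q) :
    pdt (fun r => ∑ k ∈ s, F k r) q = ∑ k ∈ s, pdt (F k) q := by
  simp [pdt, fderiv_fun_sum hF]

lemma differentiableAt_pdx (k : Fin n) (hf : ContDiffAt ℝ 2 f q) :
    DifferentiableAt ℝ (pdx k f) q :=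
  ((hf.fderiv_right (m := 1) (by norm_num)).differentiableAt one_ne_zero).clm_apply
    (differentiableAt_const _)

lemma pdt_pdx_comm (k : Fin n) (hf : ContDiffAt ℝ 2 f q) : pdt (pdx k f) q = pdx k (pdt f) q :=
  fderiv_fderiv_apply_comm hf _ _

lemma pd_slice (k : Fin n) (hf : DifferentiableAt ℝ f q) :
    pd k (fun y => f (q.1, y)) q.2 = pdx k f q := by
  have hslice : HasFDerivAt (fun y : Rn n => (q.1, y))
      ((0 : Rn n →L[ℝ] ℝ).prod (ContinuousLinearMap.id ℝ (Rn n))) q.2 :=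
    (hasFDerivAt_const q.1 q.2).prodMk (hasFDerivAt_id q.2)
  have hcomp : HasFDerivAt (fun y => f (q.1, y)) _ q.2 := hf.hasFDerivAt.comp q.2 hslice
  rw [pd, hcomp.fderiv]
  rfl

lemma divOp_congr {G G' : ℝ × Rn n → FullSp m n} (h : G =ᶠ[nhds q] G') :
    divOp G q = divOp G' q := by
  have hcomp : ∀ idx, (fun r => G r idx) =ᶠ[nhds q] fun r => G' r idx := fun idx =>
    h.mono fun r hr => congrArg (· idx) hr
  ext i
  simp only [divOp, pdt, pdx, (hcomp _).fderiv_eq]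

end PartialDerivatives

/-- `D` acting in the `x`-variable on a function of `(t, x)`. -/
def DopX (v : ℝ × Rn n → FullSp m n) (q : ℝ × Rn n) : FullSp m n :=
  WithLp.toLp 2 (Sum.elim (fun i => ∑ k, pdx k (fun r => v r (Sum.inr (i, k))) q)
    (fun p => -pdx p.2 (fun r => v r (Sum.inl p.1)) q) : Fin m ⊕ Fin m × Fin n → ℂ)

section ConjugateSystem

variable {v : ℝ × Rn n → FullSp m n} {q : ℝ × Rn n}

lemma Dop_slice (hv : ∀ idx, DifferentiableAt ℝ (fun r => v r idx) q) :
    Dop (fun y => v (q.1, y)) q.2 = DopX v q := by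
  ext (i | p) <;> simp [Dop, DopX, pd_slice _ (hv _)]

lemma fullGrad_neg_projN (v : ℝ × Rn n → FullSp m n) (q : ℝ × Rn n) :
    fullGrad (fun r => WithLp.toLp 2 (fun i => -v r (Sum.inl i) : Fin m → ℂ)) q
      = injN m n (-projN m n (pdtVec v q)) + injT m n (projT m n (DopX v q)) := by
  ext (i | p) <;> simp [fullGrad, DopX, pdtVec, pdt_neg, pdx_neg]

lemma conormalGrad_eq (A : Rn n → FullSp m n →L[ℂ] FullSp m n) (u : ℝ × Rn n → NormalSp m) :
    conormalGrad A u q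
      = injN m n (projN m n (A q.2 (fullGrad u q))) + injT m n (projT m n (fullGrad u q)) := by
  ext (i | p) <;> simp [conormalGrad, fullGrad]

lemma divOp_conjugate_eq_zero (hv : ∀ idx, ContDiffAt ℝ 2 (fun r => v r idx) q) :
    divOp (fun r => injN m n (projN m n (DopX v r)) + injT m n (-projT m n (pdtVec v r))) q
      = 0 := by
  ext i
  simp only [divOp, DopX, pdtVec, PiLp.add_apply, PiLp.neg_apply, injN_apply_inl,
    injN_apply_inr, injT_apply_inl, injT_apply_inr, projN_apply, projT_apply,
    PiLp.toLp_apply, Sum.elim_inl, add_zero, zero_add]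
  rw [pdt_sum _ fun k _ => differentiableAt_pdx k (hv _)]
  simp only [pdx_neg, pdt_pdx_comm _ (hv _), ← Finset.sum_add_distrib, add_neg_cancel,
    Finset.sum_const_zero, PiLp.zero_apply]

end ConjugateSystem

theorem statement10_general (m n : ℕ)
    (Ω : Set (ℝ × Rn n)) (hΩ : IsOpen Ω)
    (A : Rn n → FullSp m n →L[ℂ] FullSp m n)
    (hAinv : ∀ x, IsUnit (blockNN (A x)))
    (v : ℝ × Rn n → FullSp m n) (hv : ContDiffOn ℝ 2 v Ω)
    (hveq : ∀ q ∈ Ω, pdtVec v q + hatT (A q.2) (Dop (fun y => v (q.1, y)) q.2) = 0) :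
    SolvesDiv A (fun r => WithLp.toLp 2 (fun i => -(v r (Sum.inl i)) : Fin m → ℂ)) Ω ∧
    ∀ q ∈ Ω,
      conormalGrad A (fun r => WithLp.toLp 2 (fun i => -(v r (Sum.inl i)) : Fin m → ℂ)) q
        = Dop (fun y => v (q.1, y)) q.2 := by
  have hreg : ∀ q ∈ Ω, ∀ idx, ContDiffAt ℝ 2 (fun r => v r idx) q := fun q hq idx =>
    (((EuclideanSpace.proj idx).restrictScalars ℝ).contDiff.contDiffAt.comp q
      (hv.contDiffAt (hΩ.mem_nhds hq)) :)
  have hDop : ∀ q ∈ Ω, Dop (fun y => v (q.1, y)) q.2 = DopX v q := fun q hq =>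
    Dop_slice fun idx => (hreg q hq idx).differentiableAt two_ne_zero
  have hAgrad : ∀ q ∈ Ω, A q.2 (fullGrad (fun r => WithLp.toLp 2
        (fun i => -(v r (Sum.inl i)) : Fin m → ℂ)) q)
      = injN m n (projN m n (DopX v q)) + injT m n (-projT m n (pdtVec v q)) := by
    intro q hq
    have hhat : hatT (A q.2) (DopX v q) = -pdtVec v q :=
      eq_neg_of_add_eq_zero_right (hDop q hq ▸ hveq q hq)
    rw [fullGrad_neg_projN, ← map_neg (projN m n), ← map_neg (projT m n), ← hhat]
    exact apply_hatT_swap (hAinv q.2) _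
  refine ⟨fun q hq => ?_, fun q hq => ?_⟩
  · rw [divOp_congr (Filter.eventually_of_mem (hΩ.mem_nhds hq) hAgrad)]
    exact divOp_conjugate_eq_zero (hreg q hq)
  · rw [conormalGrad_eq, hAgrad q hq, fullGrad_neg_projN, hDop q hq]
    simp [injN_projN_add_injT_projT]

/-- if `v` solves `∂_t v + B(Dv) = 0` (with `B = Â` and `D` acting
in the `x`-variable), then `u := −v⊥` solves `div A∇u = 0`, and the conormal
gradient of `u` equals `Dv`. -/
theorem statement10 (m n : ℕ) (hm : 1 ≤ m) (hn : 1 ≤ n)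
    (Ω : Set (ℝ × Rn n)) (hΩ : IsOpen Ω)
    (A : Rn n → FullSp m n →L[ℂ] FullSp m n) (hA : ContDiff ℝ 1 A)
    (hAinv : ∀ x, IsUnit (blockNN (A x)))
    (v : ℝ × Rn n → FullSp m n) (hv : ContDiffOn ℝ 2 v Ω)
    (hveq : ∀ q ∈ Ω, pdtVec v q + hatT (A q.2) (Dop (fun y => v (q.1, y)) q.2) = 0) :
    SolvesDiv A (fun r => WithLp.toLp 2 (fun i => -(v r (Sum.inl i)) : Fin m → ℂ)) Ω ∧
    ∀ q ∈ Ω,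
      conormalGrad A (fun r => WithLp.toLp 2 (fun i => -(v r (Sum.inl i)) : Fin m → ℂ)) q
        = Dop (fun y => v (q.1, y)) q.2 :=
  statement10_general m n Ω hΩ A hAinv v hv hveq

end LayerPotential
end
end

section
/- Let n, m ≥ 1, let Ω ⊆ ℝ^{1+n} be open, and let A : ℝⁿ → L(ℂ^{m(1+n)}) be continuously differentiable (t-independent coefficients). Let u, w : Ω → ℂ^m be twice continuously differentiable with div(A∇u) = 0 and div(A*∇w) = 0 in Ω, where A*(x) is the pointwise Hermitian adjoint. Define the vector field V = (V₀, V₁, …, V_n) : Ω → ℂ^{1+n} by V₀(t,x) := ⟨Λ_{A(x)}(1, 0)∇u(t,x), ∇w(t,x)⟩ and V_k(t,x) := ⟨Λ_{A(x)}(0, e_k)∇u(t,x), ∇w(t,x)⟩ for k = 1, …, n, where e_k is the k-th standard basis vector of ℝⁿ. Then V is divergence free in Ω: ∂_t V₀ + Σ_{k=1}^n ∂_{x_k} V_k = 0. -/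
noncomputable section

open MeasureTheory Real ContinuousLinearMap

/-!
Write `∂_μ` for `∂_t, ∂_{x_1}, …, ∂_{x_n}` and `g_μ ∈ ℂ^m` for the `μ`-th block of `g ∈ ℂ^{m(1+n)}`.
Unfolding `Λ_A`, the Green field is
`V_μ = ⟪(∇w)_0, (A∇u)_μ⟫ + ⟪(A*∇w)_μ, (∇u)_0⟫ - δ_{μ0} ⟪∇w, A∇u⟫`.
By the product rule, the first two terms contribute `⟪∂_t w, div A∇u⟫ + ⟪div A*∇w, ∂_t u⟫ = 0`
plus `Σ_μ ⟪∂_μ ∂_t w, (A∇u)_μ⟫ + ⟪(A*∇w)_μ, ∂_μ ∂_t u⟫`. By the symmetry of second derivatives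
this is `⟪∂_t ∇w, A∇u⟫ + ⟪∇w, A ∂_t ∇u⟫`, which is `∂_t ⟪∇w, A∇u⟫` because `A` does not
depend on `t`.
-/

open scoped InnerProductSpace

section RestrictScalars

variable {𝕜 𝕜' E F G : Type*} [NontriviallyNormedField 𝕜] [NontriviallyNormedField 𝕜']
  [NormedAlgebra 𝕜 𝕜'] [NormedAddCommGroup E] [NormedSpace 𝕜 E]
  [NormedAddCommGroup F] [NormedSpace 𝕜' F] [NormedSpace 𝕜 F] [IsScalarTower 𝕜 𝕜' F]
  [NormedAddCommGroup G] [NormedSpace 𝕜' G] [NormedSpace 𝕜 G] [IsScalarTower 𝕜 𝕜' G]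
  {f : E → F} {x : E}

theorem DifferentiableAt.continuousLinearMap_comp (L : F →L[𝕜'] G) (hf : DifferentiableAt 𝕜 f x) :
    DifferentiableAt 𝕜 (fun y => L (f y)) x :=
  (L.restrictScalars 𝕜).differentiableAt.comp x hf

theorem fderiv_continuousLinearMap_comp_apply (L : F →L[𝕜'] G) (hf : DifferentiableAt 𝕜 f x)
    (v : E) : fderiv 𝕜 (fun y => L (f y)) x v = L (fderiv 𝕜 f x v) :=
  congrArg (· v) ((L.restrictScalars 𝕜).hasFDerivAt.comp x hf.hasFDerivAt).fderiv

end RestrictScalars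

theorem fderiv_apply_coord {E ι : Type*} [NormedAddCommGroup E] [NormedSpace ℝ E] [Fintype ι]
    {G : E → EuclideanSpace ℂ ι} {x : E} (hG : DifferentiableAt ℝ G x) (i : ι) (v : E) :
    fderiv ℝ (fun y => G y i) x v = fderiv ℝ G x v i :=
  fderiv_continuousLinearMap_comp_apply (EuclideanSpace.proj (𝕜 := ℂ) i) hG v

namespace LayerPotential

variable {m n : ℕ}

def projTk (m : ℕ) (k : Fin n) : FullSp m n →L[ℂ] NormalSp m :=
  LinearMap.toContinuousLinearMap
  { toFun := fun f => WithLp.toLp 2 (fun i => f (Sum.inr (i, k)) : Fin m → ℂ)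
    map_add' := by intro a b; ext i; simp
    map_smul' := by intro c a; ext i; simp }

theorem inner_eq_inner_projN_add_sum_inner_projTk (g h : FullSp m n) :
    ⟪g, h⟫_ℂ = ⟪projN m n g, projN m n h⟫_ℂ + ∑ k, ⟪projTk m k g, projTk m k h⟫_ℂ := by
  simp only [PiLp.inner_apply, Fintype.sum_sum_type, Fintype.sum_prod_type, projN, projTk,
    LinearMap.coe_toContinuousLinearMap', LinearMap.coe_mk, AddHom.coe_mk, add_right_inj]
  exact Finset.sum_comm

theorem inner_lambdaForm_one_zero (a : FullSp m n →L[ℂ] FullSp m n) (g h : FullSp m n) :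
    ⟪h, lambdaForm a 1 0 g⟫_ℂ = ⟪projN m n h, projN m n (a g)⟫_ℂ
      + ⟪projN m n (adjoint a h), projN m n g⟫_ℂ - ⟪h, a g⟫_ℂ := by
  rw [lambdaForm, add_apply, inner_add_right, coe_comp, Function.comp_apply, ← adjoint_inner_left]
  simp [PiLp.inner_apply, Fintype.sum_sum_type, Fintype.sum_prod_type, projN, tensorMap,
    contractMap]
  ring

theorem inner_lambdaForm_zero_single (a : FullSp m n →L[ℂ] FullSp m n) (g h : FullSp m n)
    (k : Fin n) :
    ⟪h, lambdaForm a 0 (Pi.single k 1) g⟫_ℂ = ⟪projN m n h, projTk m k (a g)⟫_ℂ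
      + ⟪projTk m k (adjoint a h), projN m n g⟫_ℂ := by
  rw [lambdaForm, add_apply, inner_add_right, coe_comp, Function.comp_apply, ← adjoint_inner_left,
    add_comm]
  simp [PiLp.inner_apply, Fintype.sum_sum_type, Fintype.sum_prod_type, projN, projTk, tensorMap,
    contractMap, Pi.single_apply, apply_ite, ite_mul, Finset.sum_ite_eq']

variable {q : ℝ × Rn n}

theorem pdt_add {f g : ℝ × Rn n → ℂ} (hf : DifferentiableAt ℝ f q) (hg : DifferentiableAt ℝ g q) :
    pdt (fun r => f r + g r) q = pdt f q + pdt g q := by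
  simp only [pdt, fderiv_fun_add hf hg, add_apply]

theorem pdt_sub {f g : ℝ × Rn n → ℂ} (hf : DifferentiableAt ℝ f q) (hg : DifferentiableAt ℝ g q) :
    pdt (fun r => f r - g r) q = pdt f q - pdt g q := by
  simp only [pdt, fderiv_fun_sub hf hg, sub_apply]

theorem pdx_add {f g : ℝ × Rn n → ℂ} (k : Fin n) (hf : DifferentiableAt ℝ f q)
    (hg : DifferentiableAt ℝ g q) : pdx k (fun r => f r + g r) q = pdx k f q + pdx k g q := by
  simp only [pdx, fderiv_fun_add hf hg, add_apply]

section Gradient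

def fderivToGrad (m n : ℕ) : ((ℝ × Rn n) →L[ℝ] NormalSp m) →L[ℝ] FullSp m n :=
  LinearMap.toContinuousLinearMap
  { toFun := fun L => WithLp.toLp 2 (Sum.elim (fun i => L (1, 0) i)
      (fun p => L (0, EuclideanSpace.single p.2 1) p.1) : Fin m ⊕ Fin m × Fin n → ℂ)
    map_add' := by intro a b; ext (i | p) <;> simp
    map_smul' := by intro c a; ext (i | p) <;> simp }

variable {u : ℝ × Rn n → NormalSp m}

theorem fullGrad_eq_fderivToGrad {r : ℝ × Rn n} (hu : DifferentiableAt ℝ u r) :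
    fullGrad u r = fderivToGrad m n (fderiv ℝ u r) := by
  ext (i | p) <;> simp [fullGrad, fderivToGrad, pdt, pdx, fderiv_apply_coord hu]

theorem hasFDerivAt_fullGrad (hu : ContDiffAt ℝ 2 u q) :
    HasFDerivAt (fullGrad u) ((fderivToGrad m n).comp (fderiv ℝ (fderiv ℝ u) q)) q := by
  have hdiff : ∀ᶠ r in nhds q, DifferentiableAt ℝ u r :=
    (hu.eventually (by simp)).mono fun r hr => hr.differentiableAt (by norm_num)
  have hfd : DifferentiableAt ℝ (fderiv ℝ u) q :=
    (hu.fderiv_right (m := 1) (by norm_num)).differentiableAt one_ne_zero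
  exact ((fderivToGrad m n).hasFDerivAt.comp q hfd.hasFDerivAt).congr_of_eventuallyEq
    (hdiff.mono fun r hr => fullGrad_eq_fderivToGrad hr)

theorem projTk_fderiv_fullGrad (hu : ContDiffAt ℝ 2 u q) (k : Fin n) :
    projTk m k (fderiv ℝ (fullGrad u) q (1, 0))
      = projN m n (fderiv ℝ (fullGrad u) q (0, EuclideanSpace.single k 1)) := by
  rw [(hasFDerivAt_fullGrad hu).fderiv]
  exact hu.isSymmSndFDerivAt (by simp) (1, 0) (0, EuclideanSpace.single k 1)

theorem inner_fderiv_fullGrad_left (hu : ContDiffAt ℝ 2 u q) (g : FullSp m n) :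
    ⟪fderiv ℝ (fullGrad u) q (1, 0), g⟫_ℂ
      = ⟪projN m n (fderiv ℝ (fullGrad u) q (1, 0)), projN m n g⟫_ℂ
        + ∑ k, ⟪projN m n (fderiv ℝ (fullGrad u) q (0, EuclideanSpace.single k 1)),
            projTk m k g⟫_ℂ := by
  simp only [inner_eq_inner_projN_add_sum_inner_projTk _ g, projTk_fderiv_fullGrad hu]

theorem inner_fderiv_fullGrad_right (hu : ContDiffAt ℝ 2 u q) (g : FullSp m n) :
    ⟪g, fderiv ℝ (fullGrad u) q (1, 0)⟫_ℂ
      = ⟪projN m n g, projN m n (fderiv ℝ (fullGrad u) q (1, 0))⟫_ℂ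
        + ∑ k, ⟪projTk m k g,
            projN m n (fderiv ℝ (fullGrad u) q (0, EuclideanSpace.single k 1))⟫_ℂ := by
  simp only [inner_eq_inner_projN_add_sum_inner_projTk g, projTk_fderiv_fullGrad hu]

end Gradient

section Divergence

variable {F G : ℝ × Rn n → FullSp m n}

theorem divOp_eq (hG : DifferentiableAt ℝ G q) :
    divOp G q = projN m n (fderiv ℝ G q (1, 0))
      + ∑ k, projTk m k (fderiv ℝ G q (0, EuclideanSpace.single k 1)) := by
  ext i
  simp [divOp, pdt, pdx, fderiv_apply_coord hG, projN, projTk]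

theorem pdt_add_sum_pdx_inner_projN_left (hF : DifferentiableAt ℝ F q)
    (hG : DifferentiableAt ℝ G q) :
    pdt (fun r => ⟪projN m n (F r), projN m n (G r)⟫_ℂ) q
      + ∑ k, pdx k (fun r => ⟪projN m n (F r), projTk m k (G r)⟫_ℂ) q
      = ⟪projN m n (F q), divOp G q⟫_ℂ + (⟪projN m n (fderiv ℝ F q (1, 0)), projN m n (G q)⟫_ℂ
        + ∑ k, ⟪projN m n (fderiv ℝ F q (0, EuclideanSpace.single k 1)), projTk m k (G q)⟫_ℂ) := by
  simp only [pdt, pdx, fderiv_inner_apply ℂ (hF.continuousLinearMap_comp _)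
      (hG.continuousLinearMap_comp _),
    fderiv_continuousLinearMap_comp_apply _ hF, fderiv_continuousLinearMap_comp_apply _ hG,
    divOp_eq hG, inner_add_right, inner_sum, Finset.sum_add_distrib]
  ring

theorem pdt_add_sum_pdx_inner_projN_right (hF : DifferentiableAt ℝ F q)
    (hG : DifferentiableAt ℝ G q) :
    pdt (fun r => ⟪projN m n (G r), projN m n (F r)⟫_ℂ) q
      + ∑ k, pdx k (fun r => ⟪projTk m k (G r), projN m n (F r)⟫_ℂ) q
      = ⟪divOp G q, projN m n (F q)⟫_ℂ + (⟪projN m n (G q), projN m n (fderiv ℝ F q (1, 0))⟫_ℂ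
        + ∑ k, ⟪projTk m k (G q), projN m n (fderiv ℝ F q (0, EuclideanSpace.single k 1))⟫_ℂ) := by
  simp only [pdt, pdx, fderiv_inner_apply ℂ (hG.continuousLinearMap_comp _)
      (hF.continuousLinearMap_comp _),
    fderiv_continuousLinearMap_comp_apply _ hF, fderiv_continuousLinearMap_comp_apply _ hG,
    divOp_eq hG, inner_add_left, sum_inner, Finset.sum_add_distrib]
  ring

end Divergence

section Coefficients

variable {A : Rn n → FullSp m n →L[ℂ] FullSp m n} {F G : ℝ × Rn n → FullSp m n}

theorem hasFDerivAt_coeff_apply (hA : DifferentiableAt ℝ A q.2) (hG : DifferentiableAt ℝ G q) :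
    HasFDerivAt (fun r => A r.2 (G r)) (((A q.2).restrictScalars ℝ).comp (fderiv ℝ G q)
      + (((restrictScalarsL ℂ (FullSp m n) (FullSp m n) ℝ ℝ).comp (fderiv ℝ A q.2)).comp
        (snd ℝ ℝ (Rn n))).flip (G q)) q :=
  ((restrictScalarsL ℂ (FullSp m n) (FullSp m n) ℝ ℝ).hasFDerivAt.comp q
    (hA.hasFDerivAt.comp q hasFDerivAt_snd)).clm_apply hG.hasFDerivAt

theorem pdt_inner_coeff_apply (hA : DifferentiableAt ℝ A q.2) (hF : DifferentiableAt ℝ F q)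
    (hG : DifferentiableAt ℝ G q) :
    pdt (fun r => ⟪F r, A r.2 (G r)⟫_ℂ) q
      = ⟪adjoint (A q.2) (F q), fderiv ℝ G q (1, 0)⟫_ℂ
        + ⟪fderiv ℝ F q (1, 0), A q.2 (G q)⟫_ℂ := by
  have hAG := hasFDerivAt_coeff_apply hA hG
  rw [pdt, fderiv_inner_apply ℂ hF hAG.differentiableAt, hAG.fderiv, adjoint_inner_left]
  simp

end Coefficients

theorem statement13_general (m n : ℕ)
    (Ω : Set (ℝ × Rn n)) (hΩ : IsOpen Ω)
    (A : Rn n → FullSp m n →L[ℂ] FullSp m n) (hA : ContDiff ℝ 1 A)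
    (u w : ℝ × Rn n → NormalSp m)
    (hu : ContDiffOn ℝ 2 u Ω) (hw : ContDiffOn ℝ 2 w Ω)
    (hus : SolvesDiv A u Ω)
    (hws : SolvesDiv (fun x => ContinuousLinearMap.adjoint (A x)) w Ω) :
    ∀ q ∈ Ω,
      pdt (fun r => (inner ℂ (fullGrad w r) (lambdaForm (A r.2) 1 0 (fullGrad u r)) : ℂ)) q
        + ∑ k, pdx k (fun r =>
            (inner ℂ (fullGrad w r)
              (lambdaForm (A r.2) 0 (Pi.single k 1) (fullGrad u r)) : ℂ)) q = 0 := by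
  intro q hq
  have hu2 : ContDiffAt ℝ 2 u q := hu.contDiffAt (hΩ.mem_nhds hq)
  have hw2 : ContDiffAt ℝ 2 w q := hw.contDiffAt (hΩ.mem_nhds hq)
  have hAq : DifferentiableAt ℝ A q.2 := hA.differentiable one_ne_zero q.2
  have hA'q : DifferentiableAt ℝ (fun x => adjoint (A x)) q.2 := by
    simpa only [← star_eq_adjoint] using hAq.star
  have hdu := (hasFDerivAt_fullGrad hu2).differentiableAt
  have hdw := (hasFDerivAt_fullGrad hw2).differentiableAt
  have hGu := (hasFDerivAt_coeff_apply hAq hdu).differentiableAt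
  have hGw := (hasFDerivAt_coeff_apply hA'q hdw).differentiableAt
  have hP := pdt_add_sum_pdx_inner_projN_left hdw hGu
  have hQ := pdt_add_sum_pdx_inner_projN_right hdu hGw
  have hR := pdt_inner_coeff_apply hAq hdw hdu
  rw [hus q hq, inner_zero_right, zero_add] at hP
  rw [hws q hq, inner_zero_left, zero_add] at hQ
  rw [inner_fderiv_fullGrad_left hw2, inner_fderiv_fullGrad_right hu2] at hR
  have hdP (L : FullSp m n →L[ℂ] NormalSp m) := (hdw.continuousLinearMap_comp (projN m n)).inner ℂ
    (hGu.continuousLinearMap_comp L)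
  have hdQ (L : FullSp m n →L[ℂ] NormalSp m) := (hGw.continuousLinearMap_comp L).inner ℂ
    (hdu.continuousLinearMap_comp (projN m n))
  simp only [inner_lambdaForm_one_zero, inner_lambdaForm_zero_single]
  rw [pdt_sub ((hdP _).fun_add (hdQ _)) (hdw.inner ℂ hGu), pdt_add (hdP _) (hdQ _),
    Finset.sum_congr rfl fun k _ => pdx_add k (hdP (projTk m k)) (hdQ (projTk m k)),
    Finset.sum_add_distrib]
  linear_combination hP + hQ - hR

/-- the Green-type field `V = (⟨Λ_A(1,0)∇u, ∇w⟩, (⟨Λ_A(0,e_k)∇u, ∇w⟩)_k)`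
built from solutions `u` of `div A∇u = 0` and `w` of `div A*∇w = 0` is divergence free. -/
theorem statement13 (m n : ℕ) (hm : 1 ≤ m) (hn : 1 ≤ n)
    (Ω : Set (ℝ × Rn n)) (hΩ : IsOpen Ω)
    (A : Rn n → FullSp m n →L[ℂ] FullSp m n) (hA : ContDiff ℝ 1 A)
    (u w : ℝ × Rn n → NormalSp m)
    (hu : ContDiffOn ℝ 2 u Ω) (hw : ContDiffOn ℝ 2 w Ω)
    (hus : SolvesDiv A u Ω)
    (hws : SolvesDiv (fun x => ContinuousLinearMap.adjoint (A x)) w Ω) :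
    ∀ q ∈ Ω,
      pdt (fun r => (inner ℂ (fullGrad w r) (lambdaForm (A r.2) 1 0 (fullGrad u r)) : ℂ)) q
        + ∑ k, pdx k (fun r =>
            (inner ℂ (fullGrad w r)
              (lambdaForm (A r.2) 0 (Pi.single k 1) (fullGrad u r)) : ℂ)) q = 0 :=
  statement13_general m n Ω hΩ A hA u w hu hw hus hws

end LayerPotential
end
end
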